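/- Let α, τ > 0, let u > 0, let x ∈ ℝ, and set m := x e^{−αu} and σ_u² := (τ²/(2α))(1 − e^{−2αu}). Let W be a real Gaussian random variable with mean m and variance σ_u². Let h : ℝ → ℝ be strictly increasing and continuous and satisfy condition [A₊] with parameter b₊ > 0. Then the right tail of the distribution of h(W) is regularly varying at infinity with index −β_{+,u}, where β_{+,u} = 1/(2 b₊ σ_u²) = α/(b₊ τ² (1 − e^{−2αu})); moreover β_{+,u} > β₊ := α/(b₊ τ²). -/

import Mathlib

open MeasureTheory ProbabilityTheory Filter Real Set Asymptotics Topology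
open scoped NNReal

/-!
Write `σ² = su2` for the variance of `W` and `g` for the inverse of `h`, so that
`h(W) > y` is the event `W > g(y)`. Mills' ratio bounds give
`∫_s^∞ exp(-w²/(2σ²)) dw ~ σ²/s · exp(-s²/(2σ²))`, hence `P(W > s)/P(W > t) → exp(-c/(2σ²))` when
`s, t → ∞` with `s² - t² → c`. For `s = g(ly)` and `t = g(y)`, condition [A₊] gives
`b(s² - t²) + f(s) - f(t) → log l`, and the mean value theorem with `f'(z) = o(z)` makes
`f(s) - f(t) = o(s² - t²)`. So `s² - t² → log l / b` and the tail ratio tends to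
`exp(-log l/(2bσ²)) = l^{-1/(2bσ²)}`.
-/

section GaussianTail

variable {v : ℝ}

lemma integrable_exp_neg_sq_div (hv : 0 < v) :
    Integrable fun w : ℝ => exp (-w ^ 2 / (2 * v)) := by
  convert integrable_exp_neg_mul_sq (inv_pos.2 (by positivity : 0 < 2 * v)) using 3
  ring

lemma integrable_mul_exp_neg_sq_div (hv : 0 < v) :
    Integrable fun w : ℝ => w * exp (-w ^ 2 / (2 * v)) := by
  convert integrable_mul_exp_neg_mul_sq (inv_pos.2 (by positivity : 0 < 2 * v)) using 4
  ring

lemma tendsto_exp_neg_sq_div_atTop (hv : 0 < v) :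
    Tendsto (fun w : ℝ => exp (-w ^ 2 / (2 * v))) atTop (𝓝 0) := by
  refine tendsto_exp_atBot.comp ?_
  simp_rw [neg_div]
  exact tendsto_neg_atTop_atBot.comp
    ((tendsto_pow_atTop two_ne_zero).atTop_div_const (by positivity))

lemma hasDerivAt_exp_neg_sq_div (v w : ℝ) :
    HasDerivAt (fun w : ℝ => exp (-w ^ 2 / (2 * v))) (-(w / v) * exp (-w ^ 2 / (2 * v))) w := by
  convert ((hasDerivAt_pow 2 w).fun_neg.div_const (2 * v)).exp using 1
  ring

lemma integral_Ioi_mul_exp_neg_sq_div (hv : 0 < v) (t : ℝ) :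
    ∫ w in Ioi t, w * exp (-w ^ 2 / (2 * v)) = v * exp (-t ^ 2 / (2 * v)) := by
  have hderiv (w : ℝ) (_ : w ∈ Ici t) :
      HasDerivAt (fun w => -v * exp (-w ^ 2 / (2 * v))) (w * exp (-w ^ 2 / (2 * v))) w := by
    refine ((hasDerivAt_exp_neg_sq_div v w).const_mul (-v)).congr_deriv ?_
    field_simp
  have hlim := (tendsto_exp_neg_sq_div_atTop hv).const_mul (-v)
  rw [mul_zero] at hlim
  rw [integral_Ioi_of_hasDerivAt_of_tendsto' hderiv
    (integrable_mul_exp_neg_sq_div hv).integrableOn hlim]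
  ring

lemma integral_Ioi_exp_neg_sq_div_le (hv : 0 < v) {t : ℝ} (ht : 0 < t) :
    ∫ w in Ioi t, exp (-w ^ 2 / (2 * v)) ≤ v / t * exp (-t ^ 2 / (2 * v)) := calc
  ∫ w in Ioi t, exp (-w ^ 2 / (2 * v))
      ≤ ∫ w in Ioi t, t⁻¹ * (w * exp (-w ^ 2 / (2 * v))) := by
    refine setIntegral_mono_on (integrable_exp_neg_sq_div hv).integrableOn
      ((integrable_mul_exp_neg_sq_div hv).const_mul _).integrableOn measurableSet_Ioi
      fun w hw => ?_
    rw [← mul_assoc]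
    exact le_mul_of_one_le_left (exp_pos _).le ((one_le_inv_mul₀ ht).2 (le_of_lt hw))
  _ = v / t * exp (-t ^ 2 / (2 * v)) := by
    rw [integral_const_mul, integral_Ioi_mul_exp_neg_sq_div hv]
    ring

lemma le_integral_Ioi_exp_neg_sq_div (hv : 0 < v) (t : ℝ) :
    v * t / (v + t ^ 2) * exp (-t ^ 2 / (2 * v)) ≤ ∫ w in Ioi t, exp (-w ^ 2 / (2 * v)) := by
  have hpos (w : ℝ) : 0 < v + w ^ 2 := by positivity
  have hderiv (w : ℝ) (_ : w ∈ Ici t) :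
      HasDerivAt (fun w => v * w / (v + w ^ 2) * exp (-w ^ 2 / (2 * v)))
        (2 * v ^ 2 / (v + w ^ 2) ^ 2 * exp (-w ^ 2 / (2 * v)) - exp (-w ^ 2 / (2 * v))) w := by
    have hquot := ((hasDerivAt_id' w).const_mul v).fun_div ((hasDerivAt_pow 2 w).const_add v)
      (hpos w).ne'
    refine (hquot.mul (hasDerivAt_exp_neg_sq_div v w)).congr_deriv ?_
    field_simp
    ring
  have hbound (w : ℝ) : ‖2 * v ^ 2 / (v + w ^ 2) ^ 2‖ ≤ 2 := by
    rw [norm_of_nonneg (by positivity), div_le_iff₀ (by positivity)]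
    nlinarith [sq_nonneg w]
  have hint := ((integrable_exp_neg_sq_div hv).bdd_mul
    (by fun_prop : Measurable _).aestronglyMeasurable (ae_of_all _ hbound)).sub
    (integrable_exp_neg_sq_div hv)
  have hlim : Tendsto (fun w => v * w / (v + w ^ 2) * exp (-w ^ 2 / (2 * v))) atTop (𝓝 0) := by
    have hquot : Tendsto (fun w : ℝ => v / (v / w + w)) atTop (𝓝 0) :=
      tendsto_const_nhds.div_atTop
        ((tendsto_const_nhds.div_atTop tendsto_id).add_atTop tendsto_id)
    have := hquot.mul (tendsto_exp_neg_sq_div_atTop hv)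
    rw [zero_mul] at this
    refine this.congr' ?_
    filter_upwards [eventually_gt_atTop 0] with w hw
    field_simp
  have hF := integral_Ioi_of_hasDerivAt_of_tendsto' hderiv hint.integrableOn hlim
  calc v * t / (v + t ^ 2) * exp (-t ^ 2 / (2 * v))
      = ∫ w in Ioi t,
          -(2 * v ^ 2 / (v + w ^ 2) ^ 2 * exp (-w ^ 2 / (2 * v)) - exp (-w ^ 2 / (2 * v))) := by
        rw [integral_neg, hF, zero_sub, neg_neg]
    _ ≤ ∫ w in Ioi t, exp (-w ^ 2 / (2 * v)) := by
        refine setIntegral_mono_on hint.neg.integrableOn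
          (integrable_exp_neg_sq_div hv).integrableOn measurableSet_Ioi fun w _ => ?_
        have : 0 ≤ 2 * v ^ 2 / (v + w ^ 2) ^ 2 * exp (-w ^ 2 / (2 * v)) := by positivity
        linarith

lemma integral_Ioi_exp_neg_sq_div_isEquivalent (hv : 0 < v) :
    (fun t => ∫ w in Ioi t, exp (-w ^ 2 / (2 * v))) ~[atTop]
      fun t => v / t * exp (-t ^ 2 / (2 * v)) := by
  have hpos (t : ℝ) : 0 < v + t ^ 2 := by positivity
  have hlow : Tendsto (fun t : ℝ => t ^ 2 / (v + t ^ 2)) atTop (𝓝 1) := by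
    have := tendsto_const_nhds (x := (1 : ℝ)).sub (tendsto_const_nhds (x := v).div_atTop
      (tendsto_atTop_add_const_left _ v (tendsto_pow_atTop two_ne_zero)))
    rw [sub_zero] at this
    refine this.congr fun t => ?_
    field_simp [(hpos t).ne']
    ring
  refine isEquivalent_of_tendsto_one
    (tendsto_of_tendsto_of_tendsto_of_le_of_le' hlow tendsto_const_nhds ?_ ?_)
  · filter_upwards [eventually_gt_atTop 0] with t ht
    rw [Pi.div_apply, le_div_iff₀ (by positivity)]
    calc t ^ 2 / (v + t ^ 2) * (v / t * exp (-t ^ 2 / (2 * v)))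
        = v * t / (v + t ^ 2) * exp (-t ^ 2 / (2 * v)) := by field_simp
      _ ≤ _ := le_integral_Ioi_exp_neg_sq_div hv t
  · filter_upwards [eventually_gt_atTop 0] with t ht
    exact div_le_one_of_le₀ (integral_Ioi_exp_neg_sq_div_le hv ht) (by positivity)

end GaussianTail

section TailRatio

variable {α : Type*} {l : Filter α} {s t : α → ℝ} {c : ℝ}

lemma tendsto_sub_nhds_zero_of_tendsto_sq_sub (hs : Tendsto s l atTop) (ht : Tendsto t l atTop)
    (hsq : Tendsto (fun y => s y ^ 2 - t y ^ 2) l (𝓝 c)) :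
    Tendsto (fun y => s y - t y) l (𝓝 0) := by
  refine (hsq.div_atTop (hs.atTop_add_atTop ht)).congr' ?_
  filter_upwards [hs.eventually_gt_atTop 0, ht.eventually_gt_atTop 0] with y hsy hty
  field_simp
  ring

lemma tendsto_integral_Ioi_exp_neg_sq_div_div {v : ℝ} (hv : 0 < v) (hs : Tendsto s l atTop)
    (ht : Tendsto t l atTop) (hsq : Tendsto (fun y => s y ^ 2 - t y ^ 2) l (𝓝 c)) :
    Tendsto (fun y => (∫ w in Ioi (s y), exp (-w ^ 2 / (2 * v))) /
      ∫ w in Ioi (t y), exp (-w ^ 2 / (2 * v))) l (𝓝 (exp (-c / (2 * v)))) := by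
  have hequiv := ((integral_Ioi_exp_neg_sq_div_isEquivalent hv).comp_tendsto hs).div
    ((integral_Ioi_exp_neg_sq_div_isEquivalent hv).comp_tendsto ht)
  refine hequiv.symm.tendsto_nhds ?_
  have hts : Tendsto (fun y => 1 - (s y - t y) / s y) l (𝓝 (1 - 0)) :=
    tendsto_const_nhds.sub ((tendsto_sub_nhds_zero_of_tendsto_sq_sub hs ht hsq).div_atTop hs)
  have hexp : Tendsto (fun y => exp (-(s y ^ 2 - t y ^ 2) / (2 * v))) l
      (𝓝 (exp (-c / (2 * v)))) :=
    (continuous_exp.tendsto _).comp (hsq.neg.div_const _)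
  rw [sub_zero] at hts
  refine (one_mul (exp (-c / (2 * v))) ▸ hts.mul hexp).congr' ?_
  filter_upwards [hs.eventually_gt_atTop 0, ht.eventually_gt_atTop 0] with y hsy hty
  simp only [Function.comp_apply, Pi.div_apply]
  rw [show -(s y ^ 2 - t y ^ 2) / (2 * v) = -s y ^ 2 / (2 * v) - -t y ^ 2 / (2 * v) by ring,
    exp_sub]
  field_simp
  ring

lemma gaussianReal_Ioi_toReal (m : ℝ) {v : ℝ≥0} (hv : v ≠ 0) (a : ℝ) :
    (gaussianReal m v (Ioi a)).toReal =
      (√(2 * π * v))⁻¹ * ∫ w in Ioi (a - m), exp (-w ^ 2 / (2 * v)) := by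
  have hshift : gaussianReal m v = (gaussianReal 0 v).map (· + m) := by
    rw [gaussianReal_map_add_const, zero_add]
  rw [hshift, Measure.map_apply (measurable_add_const m) measurableSet_Ioi,
    preimage_add_const_Ioi, gaussianReal_apply_eq_integral _ hv, ENNReal.toReal_ofReal
      (setIntegral_nonneg measurableSet_Ioi fun w _ => gaussianPDFReal_nonneg _ _ _),
    ← integral_const_mul]
  simp only [gaussianPDFReal, sub_zero]

lemma tendsto_gaussianReal_Ioi_div (m : ℝ) {v : ℝ≥0} (hv : v ≠ 0) (hs : Tendsto s l atTop)
    (ht : Tendsto t l atTop) (hsq : Tendsto (fun y => s y ^ 2 - t y ^ 2) l (𝓝 c)) :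
    Tendsto (fun y =>
        (gaussianReal m v (Ioi (s y))).toReal / (gaussianReal m v (Ioi (t y))).toReal)
      l (𝓝 (exp (-c / (2 * v)))) := by
  have hsq' : Tendsto (fun y => (s y - m) ^ 2 - (t y - m) ^ 2) l (𝓝 c) := by
    have := hsq.sub ((tendsto_sub_nhds_zero_of_tendsto_sq_sub hs ht hsq).const_mul (2 * m))
    rw [mul_zero, sub_zero] at this
    exact this.congr fun y => by ring
  refine (tendsto_integral_Ioi_exp_neg_sq_div_div (by positivity)
    (tendsto_atTop_add_const_right _ _ hs) (tendsto_atTop_add_const_right _ _ ht) hsq').congr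
    fun y => ?_
  have hv' : 0 < 2 * π * (v : ℝ) := by positivity
  simp only [gaussianReal_Ioi_toReal m hv, sub_eq_add_neg]
  exact (mul_div_mul_left _ _ (inv_pos.2 (sqrt_pos.2 hv')).ne').symm

end TailRatio

section SubquadraticCorrection

variable {f : ℝ → ℝ}

lemma abs_sub_le_mul_abs_sq_sub_of_abs_deriv_le (hf : Differentiable ℝ f) {ε Z a c : ℝ}
    (hε : 0 ≤ ε) (hZ : 0 ≤ Z) (hderiv : ∀ z, Z ≤ z → |deriv f z| ≤ ε * z) (ha : Z ≤ a)
    (hc : Z ≤ c) : |f c - f a| ≤ ε * |c ^ 2 - a ^ 2| := by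
  wlog hac : a ≤ c generalizing a c
  · rw [abs_sub_comm, abs_sub_comm (c ^ 2)]
    exact this hc ha (le_of_not_ge hac)
  have hmvt : ‖f c - f a‖ ≤ ε * c * ‖c - a‖ :=
    (convex_Icc a c).norm_image_sub_le_of_norm_deriv_le (fun z _ => hf z)
      (fun z hz => (hderiv z (ha.trans hz.1)).trans (by nlinarith [hz.2]))
      (left_mem_Icc.2 hac) (right_mem_Icc.2 hac)
  rw [Real.norm_eq_abs, Real.norm_eq_abs, abs_of_nonneg (sub_nonneg.2 hac)] at hmvt
  rw [abs_of_nonneg (by nlinarith : 0 ≤ c ^ 2 - a ^ 2)]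
  nlinarith [mul_nonneg (mul_nonneg hε (hZ.trans ha)) (sub_nonneg.2 hac)]

lemma exists_abs_sub_le_mul_abs_sq_sub (hf : Differentiable ℝ f)
    (hf' : Tendsto (fun z => deriv f z / z) atTop (𝓝 0)) {ε : ℝ} (hε : 0 < ε) :
    ∃ Z, ∀ a, Z ≤ a → ∀ c, Z ≤ c → |f c - f a| ≤ ε * |c ^ 2 - a ^ 2| := by
  have hderiv : ∀ᶠ z in atTop, 0 < z ∧ |deriv f z| ≤ ε * z := by
    filter_upwards [Metric.tendsto_nhds.1 hf' ε hε, eventually_gt_atTop 0] with z hz hz0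
    rw [dist_zero_right, norm_div, Real.norm_eq_abs, Real.norm_of_nonneg hz0.le,
      div_lt_iff₀ hz0] at hz
    exact ⟨hz0, hz.le⟩
  obtain ⟨Z, hZ⟩ := eventually_atTop.1 hderiv
  exact ⟨Z, fun a ha c hc => abs_sub_le_mul_abs_sq_sub_of_abs_deriv_le hf hε.le
    (hZ Z le_rfl).1.le (fun z hz => (hZ z hz).2) ha hc⟩

lemma isLittleO_sub_sq_sub (hf : Differentiable ℝ f)
    (hf' : Tendsto (fun z => deriv f z / z) atTop (𝓝 0)) :
    (fun p : ℝ × ℝ => f p.1 - f p.2) =o[atTop ×ˢ atTop] fun p => p.1 ^ 2 - p.2 ^ 2 := by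
  refine IsLittleO.of_bound fun ε hε => ?_
  obtain ⟨Z, hZ⟩ := exists_abs_sub_le_mul_abs_sq_sub hf hf' hε
  filter_upwards [(eventually_ge_atTop Z).prod_mk (eventually_ge_atTop Z)] with p hp
  exact hZ _ hp.2 _ hp.1

lemma tendsto_mul_sq_add_atTop {b : ℝ} (hb : 0 < b) (hf : Differentiable ℝ f)
    (hf' : Tendsto (fun z => deriv f z / z) atTop (𝓝 0)) :
    Tendsto (fun z => b * z ^ 2 + f z) atTop atTop := by
  obtain ⟨Z, hZ⟩ := exists_abs_sub_le_mul_abs_sq_sub hf hf' (half_pos hb)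
  have hlow : Tendsto (fun z => b / 2 * z ^ 2 + (f Z - b / 2 * Z ^ 2)) atTop atTop :=
    tendsto_atTop_add_const_right _ _
      ((tendsto_pow_atTop two_ne_zero).const_mul_atTop (half_pos hb))
  refine tendsto_atTop_mono' _ ?_ hlow
  filter_upwards [eventually_ge_atTop Z] with z hz
  have hsq : |z ^ 2 - Z ^ 2| ≤ z ^ 2 + Z ^ 2 := by
    rw [abs_le]
    constructor <;> nlinarith [sq_nonneg z, sq_nonneg Z]
  nlinarith [neg_abs_le (f z - f Z), hZ Z le_rfl z hz,
    mul_le_mul_of_nonneg_left hsq (half_pos hb).le]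

end SubquadraticCorrection

lemma tendsto_of_tendsto_mul_add_isLittleO {α : Type*} {l : Filter α} {D E : α → ℝ} {b c : ℝ}
    (hb : b ≠ 0) (hED : E =o[l] D) (h : Tendsto (fun y => b * D y + E y) l (𝓝 c)) :
    Tendsto D l (𝓝 (c / b)) := by
  have hbD : (fun y => b * D y) =O[l] fun _ => (1 : ℝ) := by
    refine ((hED.const_mul_right hb).right_isBigO_add.trans ?_)
    simpa only [add_comm] using h.isBigO_one ℝ
  have hE : Tendsto E l (𝓝 0) :=
    (isLittleO_one_iff ℝ).1 ((hED.const_mul_right hb).trans_isBigO hbD)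
  have := (h.sub hE).div_const b
  rw [sub_zero] at this
  exact this.congr fun y => by field_simp; ring

section ConditionAPlus

variable {h f r : ℝ → ℝ} {b : ℝ}

lemma tendsto_atTop_of_eventually_eq_exp (hb : 0 < b) (hf : Differentiable ℝ f)
    (hf' : Tendsto (fun z => deriv f z / z) atTop (𝓝 0)) (hr : Tendsto r atTop (𝓝 0))
    (hrep : ∀ᶠ z in atTop, h z = exp (b * z ^ 2 + f z + r z)) :
    Tendsto h atTop atTop :=
  (tendsto_exp_atTop.comp ((tendsto_mul_sq_add_atTop hb hf hf').atTop_add hr)).congr'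
    (hrep.mono fun _ hz => hz.symm)

lemma tendsto_sq_sub_of_eventually_eq_mul (hb : 0 < b) (hf : Differentiable ℝ f)
    (hf' : Tendsto (fun z => deriv f z / z) atTop (𝓝 0)) (hr : Tendsto r atTop (𝓝 0))
    (hrep : ∀ᶠ z in atTop, h z = exp (b * z ^ 2 + f z + r z)) {α : Type*} {l : Filter α}
    {s t : α → ℝ} {κ : ℝ} (hκ : 0 < κ) (hs : Tendsto s l atTop) (ht : Tendsto t l atTop)
    (hst : ∀ᶠ y in l, h (s y) = κ * h (t y)) :
    Tendsto (fun y => s y ^ 2 - t y ^ 2) l (𝓝 (log κ / b)) := by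
  refine tendsto_of_tendsto_mul_add_isLittleO hb.ne'
    ((isLittleO_sub_sq_sub hf hf').comp_tendsto (hs.prodMk ht)) ?_
  have hrst : Tendsto (fun y => log κ + (r (t y) - r (s y))) l (𝓝 (log κ)) := by
    simpa using tendsto_const_nhds.add ((hr.comp ht).sub (hr.comp hs))
  refine hrst.congr' ?_
  filter_upwards [hst, hs.eventually hrep, ht.eventually hrep] with y hy hsy hty
  rw [hsy, hty, ← exp_log hκ, ← exp_add, exp_eq_exp] at hy
  simp only [Function.comp_apply]
  linarith

end ConditionAPlus

lemma eventually_apply_invFun_eq {h : ℝ → ℝ} (hcont : Continuous h)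
    (htop : Tendsto h atTop atTop) : ∀ᶠ y in atTop, h (Function.invFun h y) = y := by
  filter_upwards [eventually_ge_atTop (h 0)] with y hy
  exact Function.invFun_eq
    (mem_range_of_exists_le_of_exists_ge hcont ⟨0, hy⟩ (htop.eventually_ge_atTop y).exists)

lemma tendsto_invFun_atTop {α β : Type*} [Nonempty α] [LinearOrder α] [Preorder β] {h : α → β}
    (hmono : StrictMono h) (hinv : ∀ᶠ y in atTop, h (Function.invFun h y) = y) :
    Tendsto (Function.invFun h) atTop atTop := by
  refine tendsto_atTop.2 fun M => ?_
  filter_upwards [hinv, eventually_ge_atTop (h M)] with y hy hMy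
  by_contra! hlt
  have := hmono hlt
  rw [hy] at this
  exact this.not_ge hMy

lemma measure_setOf_gt_comp_eq_map_Ioi {Ω : Type*} [MeasurableSpace Ω] {μ : Measure Ω}
    {W : Ω → ℝ} (hW : Measurable W) {h : ℝ → ℝ} (hmono : StrictMono h) {y z : ℝ}
    (hz : h z = y) :
    μ {ω | h (W ω) > y} = μ.map W (Ioi z) := by
  rw [Measure.map_apply hW measurableSet_Ioi, ← hz]
  simp only [gt_iff_lt, hmono.lt_iff_lt]
  rfl

theorem transformed_OU_transition_right_tail_regularly_varying_general
    {Ω : Type*} [MeasurableSpace Ω] (μ : Measure Ω)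
    (α τ u x : ℝ) (hα : 0 < α) (hτ : 0 < τ) (hu : 0 < u)
    (su2 : ℝ) (hsu2 : su2 = τ ^ 2 / (2 * α) * (1 - Real.exp (-(2 * α * u))))
    (W : Ω → ℝ) (hWmeas : Measurable W)
    (hWlaw : μ.map W = gaussianReal (x * Real.exp (-(α * u))) su2.toNNReal)
    (h : ℝ → ℝ) (hmono : StrictMono h) (hcont : Continuous h)
    (b : ℝ) (hb : 0 < b)
    (f r : ℝ → ℝ)
    (hf : Differentiable ℝ f)
    (hf' : Tendsto (fun z => deriv f z / z) atTop (nhds 0))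
    (hr : Tendsto r atTop (nhds 0))
    (hrep : ∀ᶠ z in atTop, h z = Real.exp (b * z ^ 2 + f z + r z)) :
    (∀ l : ℝ, 0 < l →
      Tendsto
        (fun y => (μ {ω | h (W ω) > l * y}).toReal / (μ {ω | h (W ω) > y}).toReal)
        atTop (nhds (l ^ (-(1 / (2 * b * su2)))))) ∧
    1 / (2 * b * su2) = α / (b * τ ^ 2 * (1 - Real.exp (-(2 * α * u)))) ∧
    1 / (2 * b * su2) > α / (b * τ ^ 2) := by
  have hdecay : exp (-(2 * α * u)) < 1 := exp_lt_one_iff.2 (neg_neg_of_pos (by positivity))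
  have hv : 0 < su2 := hsu2 ▸ mul_pos (by positivity) (sub_pos.2 hdecay)
  have hβ : 1 / (2 * b * su2) = α / (b * τ ^ 2 * (1 - exp (-(2 * α * u)))) := by
    rw [hsu2]
    field_simp
  refine ⟨fun l hl => ?_, hβ, ?_⟩
  · have hinv := eventually_apply_invFun_eq hcont
      (tendsto_atTop_of_eventually_eq_exp hb hf hf' hr hrep)
    have hg := tendsto_invFun_atTop hmono hinv
    have hly : Tendsto (l * ·) atTop atTop := tendsto_id.const_mul_atTop hl
    have hinv_l := hly.eventually hinv
    have hsq := tendsto_sq_sub_of_eventually_eq_mul hb hf hf' hr hrep hl (hg.comp hly) hg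
      (by filter_upwards [hinv_l, hinv] with y h1 h2; rw [Function.comp_apply, h1, h2])
    have hlim := tendsto_gaussianReal_Ioi_div (x * exp (-(α * u)))
      (Real.toNNReal_pos.2 hv).ne' (hg.comp hly) hg hsq
    rw [Real.coe_toNNReal _ hv.le,
      show -(log l / b) / (2 * su2) = log l * -(1 / (2 * b * su2)) by ring,
      ← rpow_def_of_pos hl] at hlim
    refine hlim.congr' ?_
    filter_upwards [hinv_l, hinv] with y h1 h2
    rw [measure_setOf_gt_comp_eq_map_Ioi hWmeas hmono h1,
      measure_setOf_gt_comp_eq_map_Ioi hWmeas hmono h2, hWlaw]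
    rfl
  · rw [hβ, gt_iff_lt]
    exact div_lt_div_of_pos_left hα (by positivity)
      (mul_lt_of_lt_one_right (by positivity) (sub_lt_self _ (exp_pos _)))

/-- If `W` has the time-`u` transition law of the OU process
`dX_t = -α X_t dt + τ dW_t` started at `x`, i.e. `W ~ N(x e^{-αu}, σ_u²)` with
`σ_u² = (τ²/(2α))(1 - e^{-2αu})`, and `h` is strictly increasing, continuous
and satisfies [A₊] with parameter `b > 0`, then the right tail of the law of `h(W)`
is regularly varying with index `-β_{+,u}` where
`β_{+,u} = 1/(2bσ_u²) = α/(bτ²(1-e^{-2αu})) > β₊ = α/(bτ²)`. -/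
theorem transformed_OU_transition_right_tail_regularly_varying
    {Ω : Type*} [MeasurableSpace Ω] (μ : Measure Ω) [IsProbabilityMeasure μ]
    (α τ u x : ℝ) (hα : 0 < α) (hτ : 0 < τ) (hu : 0 < u)
    (su2 : ℝ) (hsu2 : su2 = τ ^ 2 / (2 * α) * (1 - Real.exp (-(2 * α * u))))
    (W : Ω → ℝ) (hWmeas : Measurable W)
    (hWlaw : μ.map W = gaussianReal (x * Real.exp (-(α * u))) su2.toNNReal)
    (h : ℝ → ℝ) (hmono : StrictMono h) (hcont : Continuous h)
    (b : ℝ) (hb : 0 < b)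
    (f r : ℝ → ℝ)
    (hf : Differentiable ℝ f)
    (hf' : Tendsto (fun z => deriv f z / z) atTop (nhds 0))
    (hr : Tendsto r atTop (nhds 0))
    (hrep : ∀ᶠ z in atTop, h z = Real.exp (b * z ^ 2 + f z + r z)) :
    (∀ l : ℝ, 0 < l →
      Tendsto
        (fun y => (μ {ω | h (W ω) > l * y}).toReal / (μ {ω | h (W ω) > y}).toReal)
        atTop (nhds (l ^ (-(1 / (2 * b * su2)))))) ∧
    1 / (2 * b * su2) = α / (b * τ ^ 2 * (1 - Real.exp (-(2 * α * u)))) ∧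
    1 / (2 * b * su2) > α / (b * τ ^ 2) :=
  transformed_OU_transition_right_tail_regularly_varying_general μ α τ u x hα hτ hu su2 hsu2 W
    hWmeas hWlaw h hmono hcont b hb f r hf hf' hr hrep
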